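/- Let P₁, P₂ ∈ S^n_{++} with δ := δ_∞(P₁,P₂) ≤ h for some h > 0, where δ_∞(X,Y) = ‖log(Y^{-1/2}XY^{-1/2})‖_∞. Then ‖P₁ − P₂‖ ≤ λ_max(P₂) · (e^h − 1)/h · δ. -/

import Mathlib

open scoped Matrix.Norms.L2Operator

/-! Write `P₂ = S * S` with `S = P₂ ^ (1/2)` and `M = S⁻¹ * P₁ * S⁻¹`, so that
`P₁ - P₂ = S * (M - 1) * S` and `‖P₁ - P₂‖ ≤ ‖P₂‖ * ‖M - 1‖`. The eigenvalues of `M` are `exp tᵢ`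
with `|tᵢ| ≤ δ ≤ h`, and since the secant slope `(exp t - 1) / t` of the convex function `exp`
increases in `t`, `|exp tᵢ - 1| ≤ (exp h - 1) / h * δ`. -/

/-- The Thompson-type metric `δ_∞(X,Y) = ‖log (Y^{-1/2} X Y^{-1/2})‖_∞`, i.e. the maximum
absolute eigenvalue of the matrix logarithm of `Y^{-1/2} X Y^{-1/2}`. -/
noncomputable def deltaInf {n : ℕ} (X Y : Matrix (Fin n) (Fin n) ℝ)
    (hX : X.PosDef) (hY : Y.PosDef) : ℝ :=
  ⨆ i, |Real.log
    ((Matrix.isHermitian_mul_mul_conjTranspose ((hY.1.eigenvectorUnitary : Matrix (Fin n) (Fin n) ℝ) *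
      Matrix.diagonal ((↑) ∘ Real.sqrt ∘ hY.1.eigenvalues) *
      (star hY.1.eigenvectorUnitary : Matrix (Fin n) (Fin n) ℝ))⁻¹ hX.1).eigenvalues i)|

/-- Largest eigenvalue of a Hermitian real matrix. -/
noncomputable def lamMax {n : ℕ} {A : Matrix (Fin n) (Fin n) ℝ} (hA : A.IsHermitian) : ℝ :=
  ⨆ i, hA.eigenvalues i

open scoped Matrix

theorem Real.abs_exp_sub_one_le_mul_abs {x h : ℝ} (hh : 0 < h) (hx : |x| ≤ h) :
    |exp x - 1| ≤ (exp h - 1) / h * |x| := by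
  rcases eq_or_ne x 0 with rfl | hx0
  · simp
  have slope_le : (exp x - 1) / x ≤ (exp h - 1) / h := by
    simpa using convexOn_exp.secant_mono (Set.mem_univ 0) (Set.mem_univ x) (Set.mem_univ h)
      hx0 hh.ne' (le_of_abs_le hx)
  have slope_nonneg : 0 ≤ (exp x - 1) / x := by
    rcases hx0.lt_or_gt with hneg | hpos
    · exact div_nonneg_of_nonpos (sub_nonpos.2 (exp_le_one_iff.2 hneg.le)) hneg.le
    · exact div_nonneg (sub_nonneg.2 (one_le_exp hpos.le)) hpos.le
  calc |exp x - 1| = (exp x - 1) / x * |x| := by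
        rw [← abs_of_nonneg slope_nonneg, ← abs_mul, div_mul_cancel₀ _ hx0]
    _ ≤ (exp h - 1) / h * |x| := by gcongr

namespace Matrix

variable {m n : Type*} [Fintype m] [Fintype n] [DecidableEq n]

theorem sub_mul_conjTranspose_eq {R : Type*} [CommRing R] [StarRing R] {S : Matrix n n R}
    (hS : IsUnit S) (A : Matrix n n R) :
    A - S * Sᴴ = S * (S⁻¹ * A * S⁻¹ᴴ - 1) * Sᴴ := by
  have hSinv : S * S⁻¹ = 1 := S.mul_nonsing_inv ((isUnit_iff_isUnit_det S).1 hS)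
  have hSinvH : S⁻¹ᴴ * Sᴴ = 1 := by rw [← conjTranspose_mul, hSinv, conjTranspose_one]
  calc A - S * Sᴴ = S * S⁻¹ * A * (S⁻¹ᴴ * Sᴴ) - S * Sᴴ := by
        rw [hSinv, hSinvH, Matrix.one_mul, Matrix.mul_one]
    _ = S * (S⁻¹ * A * S⁻¹ᴴ - 1) * Sᴴ := by noncomm_ring

theorem l2_opNorm_mul_mul_conjTranspose_le {𝕜 : Type*} [RCLike 𝕜] [DecidableEq m]
    (S : Matrix m n 𝕜) (X : Matrix n n 𝕜) : ‖S * X * Sᴴ‖ ≤ ‖S * Sᴴ‖ * ‖X‖ := by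
  have hS : ‖S * Sᴴ‖ = ‖S‖ * ‖S‖ := by
    simpa [l2_opNorm_conjTranspose] using l2_opNorm_conjTranspose_mul_self Sᴴ
  calc ‖S * X * Sᴴ‖ ≤ ‖S‖ * ‖X‖ * ‖Sᴴ‖ :=
        (l2_opNorm_mul _ _).trans (by gcongr; exact l2_opNorm_mul _ _)
    _ = ‖S * Sᴴ‖ * ‖X‖ := by rw [hS, l2_opNorm_conjTranspose]; ring

theorem IsHermitian.l2_opNorm_cfc_le {A : Matrix n n ℝ} (hA : A.IsHermitian) {f : ℝ → ℝ} {c : ℝ}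
    (hc : 0 ≤ c) (hf : ∀ i, |f (hA.eigenvalues i)| ≤ c) : ‖cfc f A‖ ≤ c := by
  refine norm_cfc_le (f := f) (a := A) hc ?_
  rw [hA.spectrum_real_eq_range_eigenvalues]
  rintro - ⟨i, rfl⟩
  exact hf i

theorem PosSemidef.cfc_sqrt_mul_self {A : Matrix n n ℝ} (hA : A.PosSemidef) :
    cfc Real.sqrt A * cfc Real.sqrt A = A := by
  rw [← cfc_mul Real.sqrt Real.sqrt A]
  conv_rhs => rw [← cfc_id' ℝ A hA.1]
  refine cfc_congr fun x hx => Real.mul_self_sqrt ?_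
  rw [hA.1.spectrum_real_eq_range_eigenvalues] at hx
  obtain ⟨i, rfl⟩ := hx
  exact hA.eigenvalues_nonneg i

theorem PosDef.l2_opNorm_sub_one_le {A : Matrix n n ℝ} (hA : A.PosDef) {d h : ℝ} (hh : 0 < h)
    (hd : 0 ≤ d) (hdh : d ≤ h) (hlog : ∀ i, |Real.log (hA.1.eigenvalues i)| ≤ d) :
    ‖A - 1‖ ≤ (Real.exp h - 1) / h * d := by
  have hA_sa : IsSelfAdjoint A := hA.1.isSelfAdjoint
  have hA_sub : A - 1 = cfc (fun x : ℝ => x - 1) A := by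
    rw [cfc_sub (fun x : ℝ => x) (fun _ => 1), cfc_id' ℝ A, cfc_const (1 : ℝ) A, map_one]
  have hC : 0 ≤ (Real.exp h - 1) / h := div_nonneg (sub_nonneg.2 (Real.one_le_exp hh.le)) hh.le
  rw [hA_sub]
  refine hA.1.l2_opNorm_cfc_le (mul_nonneg hC hd) fun i => ?_
  calc |hA.1.eigenvalues i - 1|
      = |Real.exp (Real.log (hA.1.eigenvalues i)) - 1| := by
        rw [Real.exp_log (hA.eigenvalues_pos i)]
    _ ≤ (Real.exp h - 1) / h * |Real.log (hA.1.eigenvalues i)| :=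
        Real.abs_exp_sub_one_le_mul_abs hh ((hlog i).trans hdh)
    _ ≤ (Real.exp h - 1) / h * d := mul_le_mul_of_nonneg_left (hlog i) hC

end Matrix

theorem le_lamMax {n : ℕ} {A : Matrix (Fin n) (Fin n) ℝ} (hA : A.IsHermitian) (i : Fin n) :
    hA.eigenvalues i ≤ lamMax hA :=
  le_ciSup (Finite.bddAbove_range _) i

theorem Matrix.PosSemidef.l2_opNorm_le_lamMax {n : ℕ} {A : Matrix (Fin n) (Fin n) ℝ}
    (hA : A.PosSemidef) : ‖A‖ ≤ lamMax hA.1 := by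
  have hc : 0 ≤ lamMax hA.1 := Real.iSup_nonneg hA.eigenvalues_nonneg
  conv_lhs => rw [← cfc_id' ℝ A hA.1]
  exact hA.1.l2_opNorm_cfc_le hc fun i => by
    rw [abs_of_nonneg (hA.eigenvalues_nonneg i)]; exact le_lamMax hA.1 i

theorem norm_diff_le_of_deltaInf {n : ℕ} (P₁ P₂ : Matrix (Fin n) (Fin n) ℝ)
    (hP₁ : P₁.PosDef) (hP₂ : P₂.PosDef) (h : ℝ) (hh : 0 < h)
    (hδ : deltaInf P₁ P₂ hP₁ hP₂ ≤ h) :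
    ‖P₁ - P₂‖ ≤ lamMax hP₂.1 * ((Real.exp h - 1) / h) * deltaInf P₁ P₂ hP₁ hP₂ := by
  set S : Matrix (Fin n) (Fin n) ℝ := (hP₂.1.eigenvectorUnitary : Matrix (Fin n) (Fin n) ℝ) *
    Matrix.diagonal ((↑) ∘ Real.sqrt ∘ hP₂.1.eigenvalues) *
    (star hP₂.1.eigenvectorUnitary : Matrix (Fin n) (Fin n) ℝ)
  have hS : S = cfc Real.sqrt P₂ := by
    -- the coercion `(↑) : ℝ → ℝ` in `deltaInf` is `RCLike.ofReal` up to unfolding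
    rw [hP₂.1.cfc_eq, Matrix.IsHermitian.cfc, Unitary.conjStarAlgAut_apply]; rfl
  have hSS : S * Sᴴ = P₂ := by
    rw [hS, ← Matrix.star_eq_conjTranspose, (cfc_predicate Real.sqrt P₂).star_eq,
      hP₂.posSemidef.cfc_sqrt_mul_self]
  have hS_unit : IsUnit S := isUnit_of_mul_isUnit_left (hSS ▸ hP₂.isUnit)
  have hM : (S⁻¹ * P₁ * S⁻¹ᴴ).PosDef := hP₁.mul_mul_conjTranspose_same
    (Matrix.vecMul_injective_of_isUnit (Matrix.isUnit_nonsing_inv_iff.2 hS_unit))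
  have hlog : ∀ i, |Real.log (hM.1.eigenvalues i)| ≤ deltaInf P₁ P₂ hP₁ hP₂ :=
    le_ciSup (f := fun i => |Real.log (hM.1.eigenvalues i)|) (Finite.bddAbove_range _)
  have hδ0 : 0 ≤ deltaInf P₁ P₂ hP₁ hP₂ := Real.iSup_nonneg fun _ => abs_nonneg _
  calc ‖P₁ - P₂‖ = ‖S * (S⁻¹ * P₁ * S⁻¹ᴴ - 1) * Sᴴ‖ := by
        rw [← Matrix.sub_mul_conjTranspose_eq hS_unit, hSS]
    _ ≤ ‖P₂‖ * ‖S⁻¹ * P₁ * S⁻¹ᴴ - 1‖ := hSS ▸ Matrix.l2_opNorm_mul_mul_conjTranspose_le _ _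
    _ ≤ lamMax hP₂.1 * ((Real.exp h - 1) / h * deltaInf P₁ P₂ hP₁ hP₂) :=
        mul_le_mul hP₂.posSemidef.l2_opNorm_le_lamMax (hM.l2_opNorm_sub_one_le hh hδ0 hδ hlog)
          (norm_nonneg _) ((norm_nonneg _).trans hP₂.posSemidef.l2_opNorm_le_lamMax)
    _ = lamMax hP₂.1 * ((Real.exp h - 1) / h) * deltaInf P₁ P₂ hP₁ hP₂ := by ring
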